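/- arXiv:0808.4035 — 3 statements merged into one kernel-verified Lean document; each statement's English description precedes it below -/
import Mathlib

section
/- Let k be a field, D an object of 𝓠(k), H a hyperbolic space (viewed as an object of 𝓠(k)), and f, g : D → H two morphisms of 𝓠(k). Then L(f) = L(g) in 𝓠(k)[W⁻¹]. -/
open CategoryTheory

noncomputable section

namespace StableHomology

/-- An object of the category `𝓠(k)`: a finite-dimensional `k`-vector space equipped
with a quadratic form. -/
structure QuadSpace (k : Type) [Field k] : Type 1 where
  /-- the underlying vector space -/
  carrier : Type
  [isAddCommGroup : AddCommGroup carrier]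
  [isModule : Module k carrier]
  [isFinite : FiniteDimensional k carrier]
  /-- the quadratic form -/
  form : QuadraticForm k carrier

attribute [instance] QuadSpace.isAddCommGroup QuadSpace.isModule QuadSpace.isFinite

instance {k : Type} [Field k] : CoeSort (QuadSpace k) Type :=
  ⟨QuadSpace.carrier⟩

variable (k : Type) [Field k]

/-- A morphism of `𝓠(k)`: an injective linear map compatible with the quadratic forms. -/
@[ext]
structure QuadHom (X Y : QuadSpace k) : Type where
  /-- the underlying linear map -/
  toLinearMap : X →ₗ[k] Y
  injective : Function.Injective toLinearMap
  compat : ∀ x : X, Y.form (toLinearMap x) = X.form x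

instance : Category (QuadSpace k) where
  Hom X Y := QuadHom k X Y
  id X := ⟨LinearMap.id, fun _ _ h => h, fun _ => rfl⟩
  comp {X Y Z} f g := ⟨g.toLinearMap.comp f.toLinearMap, g.injective.comp f.injective,
    fun x => by
      show Z.form (g.toLinearMap (f.toLinearMap x)) = X.form x
      rw [g.compat, f.compat]⟩
  id_comp f := by apply QuadHom.ext; rfl
  comp_id f := by apply QuadHom.ext; rfl
  assoc f g h := by apply QuadHom.ext; rfl

/-- The orthogonal sum of two quadratic spaces. -/
def orthSum (X Y : QuadSpace k) : QuadSpace k where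
  carrier := X × Y
  form := QuadraticMap.prod X.form Y.form

/-- The hyperbolic plane `(k², (x, y) ↦ x y)`. -/
def hypPlane : QuadSpace k where
  carrier := k × k
  form := LinearMap.BilinMap.toQuadraticMap
    (LinearMap.mk₂ k (fun v w : k × k => v.1 * w.2)
      (fun _ _ _ => by simp [add_mul])
      (fun _ _ _ => by simp [mul_assoc])
      (fun _ _ _ => by simp [mul_add])
      (fun _ _ _ => by dsimp; ring))

/-- The hyperbolic space which is the orthogonal sum of `m` copies of the hyperbolic
plane. -/
def hypSpace : ℕ → QuadSpace k
  | 0 => { carrier := PUnit, form := 0 }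
  | (m + 1) => orthSum k (hypSpace m) (hypPlane k)

/-- The canonical inclusion `D → D ⊥ H`, `x ↦ (x, 0)`. -/
def orthIncl (D H : QuadSpace k) : D ⟶ orthSum k D H where
  toLinearMap := LinearMap.inl k D H
  injective := LinearMap.inl_injective
  compat x := by
    show QuadraticMap.prod D.form H.form (x, 0) = D.form x
    simp [QuadraticMap.prod_apply]

/-- The auxiliary inductive predicate singling out the canonical inclusions
`D → D ⊥ H` with `H` a hyperbolic space. -/
inductive IsHypIncl : ∀ (X Y : QuadSpace k), (X ⟶ Y) → Prop
  | mk (D : QuadSpace k) (m : ℕ) :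
      IsHypIncl D (orthSum k D (hypSpace k m)) (orthIncl k D (hypSpace k m))

/-- The class `W` of morphisms of `𝓠(k)` of the form `ι_D : D → D ⊥ H` with `H` a
hyperbolic space. -/
def Wq : MorphismProperty (QuadSpace k) := fun X Y f => IsHypIncl k X Y f

/-!
Every endomorphism `σ` of a hyperbolic space `X` becomes the identity in the localization: the
inclusion `ι : X → X ⊥ X` is inverted and `ι ≫ (𝟙 ⊥ σ) = ι`; conjugating by the swap gives the
same for `σ ⊥ 𝟙`, and `σ ≫ ι = ι ≫ (σ ⊥ 𝟙)`.

For `f : D → H` let `H(D) = D* ⊥ D` with form `(ψ, e) ↦ ψ e`, a hyperbolic space. Two isometries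
of `H ⊥ H(D)` carry `f ≫ ι` first to the graph `d ↦ (f d, 0, d)` and then to
`d ↦ (0, b(d, ·), d)`, where `b` is a bilinear form with `b(d, d) = q(d)`; the latter does not
depend on `f`. Hence `L(f) ≫ L(ι) = L(g) ≫ L(ι)` with `L(ι)` invertible. The construction avoids
Witt cancellation, so it works in characteristic `2` and for degenerate `q`.
-/

open QuadraticMap

variable {k}

lemma _root_.QuadraticForm.polarBilin_dualProd (V : Type) [AddCommGroup V] [Module k V] :
    (QuadraticForm.dualProd k V).polarBilin = LinearMap.dualProd k V := by
  refine LinearMap.ext₂ fun p q => ?_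
  simp only [polarBilin_apply_apply, polar, QuadraticForm.dualProd_apply, Prod.fst_add,
    Prod.snd_add, map_add, LinearMap.add_apply, LinearMap.dualProd_apply_apply]
  ring

lemma _root_.QuadraticForm.separatingLeft_polarBilin_dualProd (V : Type) [AddCommGroup V]
    [Module k V] [FiniteDimensional k V] :
    (QuadraticForm.dualProd k V).polarBilin.SeparatingLeft := by
  rw [QuadraticForm.polarBilin_dualProd, LinearMap.separatingLeft_dualProd]
  exact Module.eval_apply_injective k

lemma _root_.QuadraticMap.separatingLeft_polarBilin_prod {A B : Type} [AddCommGroup A]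
    [Module k A] [AddCommGroup B] [Module k B] {Q₁ : QuadraticForm k A} {Q₂ : QuadraticForm k B}
    (h₁ : Q₁.polarBilin.SeparatingLeft) (h₂ : Q₂.polarBilin.SeparatingLeft) :
    (Q₁.prod Q₂).polarBilin.SeparatingLeft := by
  rintro ⟨a, b⟩ hab
  have ha := h₁ a fun a' => by simpa using hab (a', 0)
  have hb := h₂ b fun b' => by simpa using hab (0, b')
  rw [ha, hb, Prod.mk_zero_zero]

lemma _root_.QuadraticMap.IsometryEquiv.separatingLeft_polarBilin {A B : Type} [AddCommGroup A]
    [Module k A] [AddCommGroup B] [Module k B] {Q₁ : QuadraticForm k A} {Q₂ : QuadraticForm k B}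
    (e : Q₁.IsometryEquiv Q₂) (h₂ : Q₂.polarBilin.SeparatingLeft) :
    Q₁.polarBilin.SeparatingLeft := by
  intro a ha
  refine e.injective ((h₂ (e a) fun b => ?_).trans (map_zero e).symm)
  have hpolar : polar Q₂ (e a) (e (e.symm b)) = polar Q₁ a (e.symm b) := by
    simp only [polar, ← map_add, e.map_app]
  rw [polarBilin_apply_apply, ← e.apply_symm_apply b, hpolar]
  exact ha (e.symm b)

lemma _root_.Module.Dual.exists_linearMap_apply_eq_quadraticForm {V : Type} [AddCommGroup V]
    [Module k V] [FiniteDimensional k V] (q : QuadraticForm k (Module.Dual k V)) :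
    ∃ s : Module.Dual k V →ₗ[k] V, ∀ ψ, ψ (s ψ) = q ψ := by
  obtain ⟨β, rfl⟩ := LinearMap.BilinMap.toQuadraticMap_surjective q
  exact ⟨(Module.evalEquiv k V).symm.toLinearMap ∘ₗ β,
    fun ψ => Module.apply_evalEquiv_symm_apply _ _ ψ _⟩

lemma _root_.QuadraticForm.exists_polar_eq_comp_of_separatingLeft {V W : Type} [AddCommGroup V]
    [Module k V] [FiniteDimensional k V] [AddCommGroup W] [Module k W] {Q : QuadraticForm k V}
    (hQ : Q.polarBilin.SeparatingLeft) (μ : V →ₗ[k] W) :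
    ∃ κ : Module.Dual k W →ₗ[k] V, ∀ ψ v, polar Q (κ ψ) v = ψ (μ v) := by
  have hrefl : Q.polarBilin.IsRefl := fun x y h => by
    rwa [polarBilin_apply_apply, polar_comm, ← polarBilin_apply_apply]
  have hQ' := hrefl.nondegenerate_iff_separatingLeft.mpr hQ
  exact ⟨(LinearMap.BilinForm.toDual Q.polarBilin hQ').symm.toLinearMap ∘ₗ μ.dualMap,
    fun ψ v => LinearMap.BilinForm.apply_toDual_symm_apply (hB := hQ') (μ.dualMap ψ) v⟩

namespace QuadSpace

@[ext]
lemma hom_ext {X Y : QuadSpace k} {f g : X ⟶ Y} (h : ∀ x, f.toLinearMap x = g.toLinearMap x) :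
    f = g :=
  QuadHom.ext (LinearMap.ext h)

lemma polar_map {X Y : QuadSpace k} (f : X ⟶ Y) (x y : X) :
    polar Y.form (f.toLinearMap x) (f.toLinearMap y) = polar X.form x y := by
  simp only [polar, ← map_add, f.compat]

def isoMk {X Y : QuadSpace k} (e : X.form.IsometryEquiv Y.form) : X ≅ Y where
  hom := ⟨e.toLinearEquiv, e.injective, e.map_app⟩
  inv := ⟨e.symm.toLinearEquiv, e.symm.injective, e.symm.map_app⟩
  hom_inv_id := by ext x; exact e.symm_apply_apply x
  inv_hom_id := by ext x; exact e.apply_symm_apply x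

/-- An isometry out of a space with nondegenerate polar form is automatically injective. -/
def homMk {X Y : QuadSpace k} (hX : X.form.polarBilin.SeparatingLeft) (φ : X →ₗ[k] Y)
    (hφ : ∀ x, Y.form (φ x) = X.form x) : X ⟶ Y where
  toLinearMap := φ
  injective := by
    refine (injective_iff_map_eq_zero φ).mpr fun x hx => hX x fun y => ?_
    have hpolar : polar Y.form (φ x) (φ y) = polar X.form x y := by
      simp only [polar, ← map_add, hφ]
    rw [polarBilin_apply_apply, ← hpolar, hx, polar_zero_left]
  compat := hφ

end QuadSpace

open QuadSpace

def orthSumMap {X X' Y Y' : QuadSpace k} (f : X ⟶ X') (g : Y ⟶ Y') :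
    orthSum k X Y ⟶ orthSum k X' Y' where
  toLinearMap := f.toLinearMap.prodMap g.toLinearMap
  injective := f.injective.prodMap g.injective
  compat p := congrArg₂ (· + ·) (f.compat p.1) (g.compat p.2)

def orthSumComm (X Y : QuadSpace k) : orthSum k X Y ≅ orthSum k Y X :=
  isoMk (IsometryEquiv.prodComm X.form Y.form)

lemma orthIncl_comp_orthSumMap_id {X Y Y' : QuadSpace k} (g : Y ⟶ Y') :
    orthIncl k X Y ≫ orthSumMap (𝟙 X) g = orthIncl k X Y' := by
  ext x
  exact Prod.ext rfl (map_zero g.toLinearMap)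

lemma comp_orthIncl {X Y : QuadSpace k} (f : X ⟶ X) :
    f ≫ orthIncl k X Y = orthIncl k X Y ≫ orthSumMap f (𝟙 Y) := by
  ext x
  rfl

lemma orthSumMap_id_comm {X Y : QuadSpace k} (f : X ⟶ X) :
    orthSumMap f (𝟙 Y) =
      (orthSumComm X Y).hom ≫ orthSumMap (𝟙 Y) f ≫ (orthSumComm X Y).inv := by
  ext x
  rfl

variable (k) in
def hypOn (V : Type) [AddCommGroup V] [Module k V] [FiniteDimensional k V] : QuadSpace k where
  carrier := Module.Dual k V × V
  form := QuadraticForm.dualProd k V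

lemma dualProd_equivalent_hypPlane : (QuadraticForm.dualProd k k).Equivalent (hypPlane k).form :=
  ⟨{ toLinearEquiv := (LinearMap.ringLmapEquivSelf k k k).prodCongr (LinearEquiv.refl k k)
     map_app' := fun ⟨φ, x⟩ => by
       change φ 1 * x = φ x
       rw [mul_comm, ← smul_eq_mul, ← map_smul, smul_eq_mul, mul_one] }⟩

lemma dualProd_fin_equivalent_hypSpace :
    ∀ n, (QuadraticForm.dualProd k (Fin n → k)).Equivalent (hypSpace k n).form
  | 0 => by
    have : Subsingleton (hypSpace k 0) := inferInstanceAs (Subsingleton PUnit)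
    exact ⟨{ toLinearEquiv := LinearEquiv.ofSubsingleton _ _
             map_app' := fun p => by rw [Subsingleton.elim p 0, map_zero]; rfl }⟩
  | n + 1 =>
    (Equivalent.trans ⟨QuadraticForm.dualProdIsometry (Fin.consLinearEquiv k fun _ => k).symm⟩
      ⟨QuadraticForm.dualProdProdIsometry⟩).trans
      ((dualProd_equivalent_hypPlane.prod (dualProd_fin_equivalent_hypSpace n)).trans
        ⟨IsometryEquiv.prodComm _ _⟩)

lemma dualProd_equivalent_hypSpace (V : Type) [AddCommGroup V] [Module k V]
    [FiniteDimensional k V] :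
    (QuadraticForm.dualProd k V).Equivalent (hypSpace k (Module.finrank k V)).form :=
  Equivalent.trans ⟨QuadraticForm.dualProdIsometry (Module.finBasis k V).equivFun⟩
    (dualProd_fin_equivalent_hypSpace _)

def IsHyperbolic (X : QuadSpace k) : Prop :=
  ∃ n, X.form.Equivalent (hypSpace k n).form

variable (k) in
lemma isHyperbolic_hypSpace (n : ℕ) : IsHyperbolic (hypSpace k n) :=
  ⟨n, .refl _⟩

variable (k) in
lemma isHyperbolic_hypOn (V : Type) [AddCommGroup V] [Module k V] [FiniteDimensional k V] :
    IsHyperbolic (hypOn k V) :=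
  ⟨_, dualProd_equivalent_hypSpace V⟩

lemma IsHyperbolic.orthSum {X Y : QuadSpace k} (hX : IsHyperbolic X) (hY : IsHyperbolic Y) :
    IsHyperbolic (orthSum k X Y) := by
  obtain ⟨a, hXa⟩ := hX
  obtain ⟨b, hYb⟩ := hY
  exact ⟨_, ((hXa.trans (dualProd_fin_equivalent_hypSpace a).symm).prod
    (hYb.trans (dualProd_fin_equivalent_hypSpace b).symm)).trans
    (Equivalent.trans ⟨QuadraticForm.dualProdProdIsometry.symm⟩
      (dualProd_equivalent_hypSpace _))⟩

lemma IsHyperbolic.separatingLeft {X : QuadSpace k} (hX : IsHyperbolic X) :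
    X.form.polarBilin.SeparatingLeft := by
  obtain ⟨n, hXn⟩ := hX
  obtain ⟨e⟩ := hXn.trans (dualProd_fin_equivalent_hypSpace n).symm
  exact e.separatingLeft_polarBilin (QuadraticForm.separatingLeft_polarBilin_dualProd _)

section Localization

variable {C : Type*} [Category C] {L : QuadSpace k ⥤ C}

lemma isIso_map_orthIncl (hL : (Wq k).IsInvertedBy L) (X : QuadSpace k) {Y : QuadSpace k}
    (hY : IsHyperbolic Y) : IsIso (L.map (orthIncl k X Y)) := by
  obtain ⟨n, ⟨e⟩⟩ := hY
  have hW : IsIso (L.map (orthIncl k X (hypSpace k n))) := hL _ (IsHypIncl.mk X n)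
  have hιe : orthIncl k X Y = orthIncl k X (hypSpace k n) ≫
      (isoMk ((QuadraticMap.IsometryEquiv.refl X.form).prod e.symm)).hom := by
    ext x
    exact Prod.ext rfl (map_zero e.symm).symm
  rw [hιe, L.map_comp]
  infer_instance

lemma map_eq_id_of_isHyperbolic (hL : (Wq k).IsInvertedBy L) {X : QuadSpace k}
    (hX : IsHyperbolic X) (σ : X ⟶ X) : L.map σ = 𝟙 _ := by
  have := isIso_map_orthIncl hL X hX
  have h₁ : L.map (orthSumMap (𝟙 X) σ) = 𝟙 _ := by
    rw [← cancel_epi (L.map (orthIncl k X X)), ← L.map_comp, orthIncl_comp_orthSumMap_id,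
      Category.comp_id]
  have h₂ : L.map (orthSumMap σ (𝟙 X)) = 𝟙 _ := by
    rw [orthSumMap_id_comm, L.map_comp, L.map_comp, h₁, Category.id_comp, ← L.map_comp,
      Iso.hom_inv_id, L.map_id]
  rw [← cancel_mono (L.map (orthIncl k X X)), ← L.map_comp, comp_orthIncl, L.map_comp, h₂,
    Category.comp_id, Category.id_comp]

lemma map_comp_endo_of_isHyperbolic (hL : (Wq k).IsInvertedBy L) {X Y : QuadSpace k}
    (hY : IsHyperbolic Y) (f : X ⟶ Y) (σ : Y ⟶ Y) : L.map (f ≫ σ) = L.map f := by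
  rw [L.map_comp, map_eq_id_of_isHyperbolic hL hY, Category.comp_id]

end Localization

section Shear

variable {E D : QuadSpace k}

def graphHom (f : D ⟶ E) : D ⟶ orthSum k E (hypOn k D) where
  toLinearMap := f.toLinearMap.prod (LinearMap.inr k (Module.Dual k D) D)
  injective _ _ h := congrArg (fun p => p.2.2) h
  compat d := by
    change E.form (f.toLinearMap d) + (0 : Module.Dual k D) d = D.form d
    rw [f.compat, LinearMap.zero_apply, add_zero]

variable (E) in
def dualGraphHom (b : LinearMap.BilinForm k D) (hb : b.toQuadraticMap = D.form) :
    D ⟶ orthSum k E (hypOn k D) where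
  toLinearMap := (0 : D →ₗ[k] E).prod (b.prod LinearMap.id)
  injective _ _ h := congrArg (fun p => p.2.2) h
  compat d := by
    change E.form 0 + b d d = D.form d
    rw [map_zero, zero_add, ← hb]
    rfl

lemma separatingLeft_polarBilin_orthSum_hypOn (hE : E.form.polarBilin.SeparatingLeft) :
    (orthSum k E (hypOn k D)).form.polarBilin.SeparatingLeft :=
  separatingLeft_polarBilin_prod hE (QuadraticForm.separatingLeft_polarBilin_dualProd D)

lemma exists_comp_orthIncl_comp_eq_graphHom (hE : E.form.polarBilin.SeparatingLeft)
    (f : D ⟶ E) : ∃ Θ : orthSum k E (hypOn k D) ⟶ orthSum k E (hypOn k D),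
      f ≫ orthIncl k E (hypOn k D) ≫ Θ = graphHom f := by
  obtain ⟨μ, hμ⟩ := f.toLinearMap.exists_leftInverse_of_injective
    (LinearMap.ker_eq_bot.mpr f.injective)
  obtain ⟨κ, hκ⟩ := QuadraticForm.exists_polar_eq_comp_of_separatingLeft hE μ
  obtain ⟨s, hs⟩ := Module.Dual.exists_linearMap_apply_eq_quadraticForm (-(E.form.comp κ))
  let pv := LinearMap.fst k E (Module.Dual k D × D)
  let pψ := LinearMap.fst k (Module.Dual k D) D ∘ₗ LinearMap.snd k E (Module.Dual k D × D)
  let pe := LinearMap.snd k (Module.Dual k D) D ∘ₗ LinearMap.snd k E (Module.Dual k D × D)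
  -- Shifting `e` by `μ v` adds `ψ (μ v)` to the form; `κ` cancels it through the cross term
  -- of `v - κ ψ`, and `s` cancels the leftover `q (κ ψ)`.
  let Θ := (pv - κ ∘ₗ pψ).prod (pψ.prod (pe + μ ∘ₗ pv + s ∘ₗ pψ))
  refine ⟨homMk (separatingLeft_polarBilin_orthSum_hypOn hE) Θ ?_, ?_⟩
  · rintro ⟨v, ψ, e⟩
    change E.form (v - κ ψ) + ψ (e + μ v + s ψ) = E.form v + ψ e
    have hsub := QuadraticMap.map_add E.form v (-κ ψ)
    rw [← sub_eq_add_neg, polar_neg_right, QuadraticMap.map_neg, polar_comm, hκ] at hsub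
    have hsψ := hs ψ
    simp only [neg_apply, QuadraticMap.comp_apply] at hsψ
    rw [map_add, map_add, hsub, hsψ]
    ring
  · ext d
    have hμd : μ (f.toLinearMap d) = d := LinearMap.congr_fun hμ d
    change (f.toLinearMap d - κ 0, (0, 0 + μ (f.toLinearMap d) + s 0)) =
      (f.toLinearMap d, (0, d))
    rw [map_zero, map_zero, sub_zero, zero_add, add_zero, hμd]

lemma exists_graphHom_comp_eq_dualGraphHom (hE : E.form.polarBilin.SeparatingLeft) (f : D ⟶ E)
    (b : LinearMap.BilinForm k D) (hb : b.toQuadraticMap = D.form) :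
    ∃ Θ : orthSum k E (hypOn k D) ⟶ orthSum k E (hypOn k D),
      graphHom f ≫ Θ = dualGraphHom E b hb := by
  let pv := LinearMap.fst k E (Module.Dual k D × D)
  let pψ := LinearMap.fst k (Module.Dual k D) D ∘ₗ LinearMap.snd k E (Module.Dual k D × D)
  let pe := LinearMap.snd k (Module.Dual k D) D ∘ₗ LinearMap.snd k E (Module.Dual k D × D)
  -- The correction `b(e, ·) - polar(e, ·)` is what makes this an isometry: `b(e, e) = q(e)`.
  let Θ := (pv - f.toLinearMap ∘ₗ pe).prod
    ((pψ + E.form.polarBilin.compl₂ f.toLinearMap ∘ₗ pv - (D.form.polarBilin - b) ∘ₗ pe).prod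
      pe)
  refine ⟨homMk (separatingLeft_polarBilin_orthSum_hypOn hE) Θ ?_, ?_⟩
  · rintro ⟨v, ψ, e⟩
    change E.form (v - f.toLinearMap e) +
      (ψ e + polar E.form v (f.toLinearMap e) - (polar D.form e e - b e e)) = E.form v + ψ e
    have hsub := QuadraticMap.map_add E.form v (-f.toLinearMap e)
    rw [← sub_eq_add_neg, polar_neg_right, QuadraticMap.map_neg, f.compat] at hsub
    have hbe : b e e = D.form e := by rw [← hb]; rfl
    rw [hsub, polar_self, hbe, two_smul]
    ring
  · ext d
    refine Prod.ext (sub_self _) (Prod.ext (LinearMap.ext fun e => ?_) rfl)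
    change 0 + polar E.form (f.toLinearMap d) (f.toLinearMap e) - (polar D.form d e - b d e) =
      b d e
    rw [polar_map]
    ring

end Shear

/-- Any two morphisms of `𝓠(k)` from `D` to a hyperbolic space become equal in the
localized category `𝓠(k)[W⁻¹]`. -/
theorem maps_to_hyperbolic_eq_in_localization
    (k : Type) [Field k] (D : QuadSpace k) (m : ℕ)
    (f g : D ⟶ hypSpace k m) :
    (Wq k).Q.map f = (Wq k).Q.map g := by
  obtain ⟨b, hb⟩ := LinearMap.BilinMap.toQuadraticMap_surjective D.form
  have hL := (Wq k).Q_inverts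
  have hE := (isHyperbolic_hypSpace k m).separatingLeft
  have hX := (isHyperbolic_hypSpace k m).orthSum (isHyperbolic_hypOn k D)
  have hι := isIso_map_orthIncl hL (hypSpace k m) (isHyperbolic_hypOn k D)
  have map_comp_orthIncl (φ : D ⟶ hypSpace k m) :
      (Wq k).Q.map (φ ≫ orthIncl k _ _) = (Wq k).Q.map (dualGraphHom (hypSpace k m) b hb) := by
    obtain ⟨Θ₂, h₂⟩ := exists_comp_orthIncl_comp_eq_graphHom hE φ
    obtain ⟨Θ₁, h₁⟩ := exists_graphHom_comp_eq_dualGraphHom hE φ b hb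
    rw [← h₁, ← h₂, map_comp_endo_of_isHyperbolic hL hX, ← Category.assoc,
      map_comp_endo_of_isHyperbolic hL hX]
  rw [← cancel_mono ((Wq k).Q.map (orthIncl k (hypSpace k m) (hypOn k D))), ← Functor.map_comp,
    ← Functor.map_comp, map_comp_orthIncl, map_comp_orthIncl]

end StableHomology
end
end

section
/- Let k be a field, D an object of 𝓠(k), H a hyperbolic space, and f an automorphism of D ⊥ H in 𝓠(k) such that f ∘ ι_D = ι_D (that is, f restricts to the identity on D). Then L(f) is the identity morphism of L(D ⊥ H) in 𝓠(k)[W⁻¹]. -/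
open CategoryTheory

noncomputable section

namespace StableHomology

variable (k : Type) [Field k]

theorem _root_.CategoryTheory.MorphismProperty.IsInvertedBy.map_eq_of_comp_eq
    {C E : Type*} [Category C] [Category E] {W : MorphismProperty C} {L : C ⥤ E}
    (hL : W.IsInvertedBy L) {X Y Z : C} {w : X ⟶ Y} (hw : W w) {f g : Y ⟶ Z}
    (h : w ≫ f = w ≫ g) : L.map f = L.map g := by
  have := hL w hw
  rw [← cancel_epi (L.map w), ← L.map_comp, h, L.map_comp]

theorem automorphism_fixing_D_eq_id_in_localization_general
    (k : Type) [Field k] (D : QuadSpace k) (m : ℕ)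
    (f : orthSum k D (hypSpace k m) ⟶ orthSum k D (hypSpace k m))
    (hrestrict : orthIncl k D (hypSpace k m) ≫ f = orthIncl k D (hypSpace k m)) :
    (Wq k).Q.map f = 𝟙 ((Wq k).Q.obj (orthSum k D (hypSpace k m))) := by
  rw [← (Wq k).Q.map_id]
  exact (Localization.inverts (Wq k).Q (Wq k)).map_eq_of_comp_eq (IsHypIncl.mk D m)
    (by rw [hrestrict, Category.comp_id])

/-- An automorphism of `D ⊥ H` (`H` hyperbolic) restricting to the identity on `D`
becomes the identity in the localized category `𝓠(k)[W⁻¹]`. -/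
theorem automorphism_fixing_D_eq_id_in_localization
    (k : Type) [Field k] (D : QuadSpace k) (m : ℕ)
    (f : orthSum k D (hypSpace k m) ⟶ orthSum k D (hypSpace k m)) (hf : IsIso f)
    (hrestrict : orthIncl k D (hypSpace k m) ≫ f = orthIncl k D (hypSpace k m)) :
    (Wq k).Q.map f = 𝟙 ((Wq k).Q.obj (orthSum k D (hypSpace k m))) :=
  automorphism_fixing_D_eq_id_in_localization_general k D m f hrestrict

end StableHomology
end
end

section
/- Let 𝒜 be a preadditive category with binary biproducts, let N and M be objects of 𝒜, and let u : N → M be a split monomorphism (i.e., there exists p : M → N with p ∘ u = id_N). Then there exists an automorphism g of the biproduct N ⊕ M such that g ∘ ι_N = ι_M ∘ u, where ι_N : N → N ⊕ M and ι_M : M → N ⊕ M denote the canonical inclusions. -/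
open CategoryTheory CategoryTheory.Limits

/-- If `u : N → M` is a split monomorphism in a preadditive category with binary
biproducts, then there is an automorphism `g` of `N ⊕ M` with `g ∘ ι_N = ι_M ∘ u`. -/
theorem split_mono_biprod_automorphism
    {C : Type*} [Category C] [Preadditive C] [HasBinaryBiproducts C]
    (N M : C) (u : N ⟶ M) (hu : ∃ p : M ⟶ N, u ≫ p = 𝟙 N) :
    ∃ g : N ⊞ M ≅ N ⊞ M, biprod.inl ≫ g.hom = u ≫ biprod.inr := by
  obtain ⟨p, hp⟩ := hu
  -- Two shears: `inl ↦ inl + u ≫ inr ↦ inl + u ≫ (inr - p ≫ inl) = u ≫ inr`.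
  refine ⟨Biprod.unipotentUpper u ≪≫ Biprod.unipotentLower (-p), ?_⟩
  simp [Biprod.ofComponents, reassoc_of% hp]
end
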